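/- arXiv:math/0701181 — 3 statements merged into one kernel-verified Lean document; each statement's English description precedes it below -/
import Mathlib

section
/- Let M₁ and M₂ be positive semidefinite symmetric real n×n matrices. Then the set C(M₁, M₂) := { M : M symmetric, M ≥ M₁ and M ≥ M₂ } (in the Loewner order) is a nonempty convex set of positive semidefinite matrices, and there exists an element M₁₂ ∈ C(M₁, M₂) attaining the minimal trace: trace(M₁₂) = inf { trace(M) : M ∈ C(M₁, M₂) }. -/
open Matrix

variable {n : ℕ}

lemma psd_smul {c : ℝ} (hc : 0 ≤ c) {A : Matrix (Fin n) (Fin n) ℝ}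
    (hA : A.PosSemidef) : (c • A).PosSemidef := by
  refine Matrix.PosSemidef.of_dotProduct_mulVec_nonneg ?_ fun x => ?_
  · unfold Matrix.IsHermitian
    rw [conjTranspose_smul, hA.1]
    simp
  · rw [smul_mulVec, dotProduct_smul]
    exact mul_nonneg hc (hA.dotProduct_mulVec_nonneg x)

lemma psd_diag_nonneg {A : Matrix (Fin n) (Fin n) ℝ} (hA : A.PosSemidef)
    (i : Fin n) : 0 ≤ A i i := by
  simpa [single_dotProduct, mulVec_single] using hA.dotProduct_mulVec_nonneg (Pi.single i 1)

lemma psd_trace_nonneg {A : Matrix (Fin n) (Fin n) ℝ} (hA : A.PosSemidef) :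
    0 ≤ A.trace := Finset.sum_nonneg fun i _ => psd_diag_nonneg hA i

lemma psd_diag_le_trace {A : Matrix (Fin n) (Fin n) ℝ} (hA : A.PosSemidef)
    (i : Fin n) : A i i ≤ A.trace :=
  Finset.single_le_sum (fun j _ => psd_diag_nonneg hA j) (Finset.mem_univ i)

lemma psd_entry_bound {A : Matrix (Fin n) (Fin n) ℝ} (hA : A.PosSemidef)
    (i j : Fin n) : |A i j| ≤ A.trace := by
  have key : ∀ c : ℝ, 0 ≤ A i i + c * A j i + (c * A i j + c * (c * A j j)) := by
    intro c
    have := hA.dotProduct_mulVec_nonneg (Pi.single i 1 + Pi.single j c)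
    simpa [mulVec_add, dotProduct_add, add_dotProduct, single_dotProduct,
      mulVec_single, mul_comm, mul_assoc, mul_left_comm, mul_add] using this
  have hsym : A i j = A j i := by
    have := hA.isHermitian.apply i j
    simpa using this.symm
  have h1 := key 1
  have h2 := key (-1)
  rw [← hsym] at h1 h2
  have hi := psd_diag_le_trace hA i
  have hj := psd_diag_le_trace hA j
  have hin := psd_diag_nonneg hA i
  have hjn := psd_diag_nonneg hA j
  rw [abs_le]
  constructor <;> nlinarith [psd_trace_nonneg hA]

lemma isClosed_isHermitian :
    IsClosed {A : Matrix (Fin n) (Fin n) ℝ | A.IsHermitian} :=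
  isClosed_eq continuous_id.matrix_conjTranspose continuous_id

lemma isClosed_psd :
    IsClosed {A : Matrix (Fin n) (Fin n) ℝ | A.PosSemidef} := by
  have : {A : Matrix (Fin n) (Fin n) ℝ | A.PosSemidef} =
      {A | A.IsHermitian} ∩ ⋂ x : Fin n → ℝ, {A | 0 ≤ x ⬝ᵥ A *ᵥ x} := by
    ext A
    simp only [Set.mem_setOf_eq, Set.mem_inter_iff, Set.mem_iInter]
    constructor
    · exact fun h => ⟨h.1, fun x => by simpa using h.dotProduct_mulVec_nonneg x⟩
    · exact fun h => Matrix.PosSemidef.of_dotProduct_mulVec_nonneg h.1 fun x => by simpa using h.2 x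
  rw [this]
  exact isClosed_isHermitian.inter <| isClosed_iInter fun x =>
    isClosed_le continuous_const
      (continuous_const.dotProduct (continuous_id.matrix_mulVec continuous_const))

/-- For positive semidefinite symmetric real matrices `M₁, M₂`, the set
`C(M₁, M₂)` of symmetric matrices dominating both in the Loewner order is a
nonempty convex set of positive semidefinite matrices containing a
minimal-trace element. -/
theorem common_majorant_cone_properties
    (n : ℕ) (M₁ M₂ : Matrix (Fin n) (Fin n) ℝ)
    (h₁ : M₁.PosSemidef) (h₂ : M₂.PosSemidef) :
    let C : Set (Matrix (Fin n) (Fin n) ℝ) :=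
      {M | M.IsHermitian ∧ (M - M₁).PosSemidef ∧ (M - M₂).PosSemidef}
    C.Nonempty ∧ Convex ℝ C ∧ (∀ M ∈ C, M.PosSemidef) ∧
      ∃ M₁₂ ∈ C, M₁₂.trace = sInf {x : ℝ | ∃ M ∈ C, x = M.trace} := by
  intro C
  have hsum : M₁ + M₂ ∈ C := by
    refine ⟨h₁.isHermitian.add h₂.isHermitian, ?_, ?_⟩
    · simpa using h₂
    · simpa [add_sub_cancel_right] using h₁
  have hpsd : ∀ M ∈ C, M.PosSemidef := by
    intro M hM
    have := hM.2.1.add h₁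
    simpa using this
  have hconv : Convex ℝ C := by
    intro A hA B hB a b ha hb hab
    refine ⟨?_, ?_, ?_⟩
    · unfold Matrix.IsHermitian
      rw [conjTranspose_add, conjTranspose_smul, conjTranspose_smul, hA.1, hB.1]
      simp
    · have e : a • A + b • B - M₁ = a • (A - M₁) + b • (B - M₁) := by
        have : M₁ = (a+b) • M₁ := by rw [hab, one_smul]
        rw [smul_sub, smul_sub]
        nth_rewrite 1 [this]
        rw [add_smul]
        abel
      rw [e]
      exact (psd_smul ha hA.2.1).add (psd_smul hb hB.2.1)
    · have e : a • A + b • B - M₂ = a • (A - M₂) + b • (B - M₂) := by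
        have : M₂ = (a+b) • M₂ := by rw [hab, one_smul]
        rw [smul_sub, smul_sub]
        nth_rewrite 1 [this]
        rw [add_smul]
        abel
      rw [e]
      exact (psd_smul ha hA.2.2).add (psd_smul hb hB.2.2)
  refine ⟨⟨_, hsum⟩, hconv, hpsd, ?_⟩
  -- compactness argument
  set T : ℝ := (M₁ + M₂).trace with hT
  set K : Set (Matrix (Fin n) (Fin n) ℝ) := C ∩ {M | M.trace ≤ T} with hK
  have hKsum : M₁ + M₂ ∈ K := ⟨hsum, le_refl T⟩
  have hCclosed : IsClosed C := by
    have : C = {M : Matrix (Fin n) (Fin n) ℝ | M.IsHermitian} ∩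
        ((fun M => M - M₁) ⁻¹' {A | A.PosSemidef}) ∩
        ((fun M => M - M₂) ⁻¹' {A | A.PosSemidef}) := by
      ext M; simp [C, Set.mem_setOf_eq, and_assoc]
    rw [this]
    exact (isClosed_isHermitian.inter
      (isClosed_psd.preimage (continuous_id.sub continuous_const))).inter
      (isClosed_psd.preimage (continuous_id.sub continuous_const))
  have hKclosed : IsClosed K :=
    hCclosed.inter (isClosed_le (continuous_id.matrix_trace) continuous_const)
  have hKsub : K ⊆ Set.pi Set.univ fun _ : Fin n =>
      Set.pi Set.univ fun _ : Fin n => Set.Icc (-T) T := by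
    intro M hM i _ j _
    have hMpsd := hpsd M hM.1
    have hb : |M i j| ≤ M.trace := psd_entry_bound hMpsd i j
    have : |M i j| ≤ T := hb.trans hM.2
    exact abs_le.mp this
  have hKcomp : IsCompact K := by
    refine IsCompact.of_isClosed_subset ?_ hKclosed hKsub
    exact isCompact_univ_pi fun i => isCompact_univ_pi fun j => isCompact_Icc
  obtain ⟨M₀, hM₀K, hMin⟩ := hKcomp.exists_isMinOn ⟨_, hKsum⟩
    (continuous_id.matrix_trace.continuousOn)
  refine ⟨M₀, hM₀K.1, ?_⟩
  have hSne : (M₁ + M₂).trace ∈ {x : ℝ | ∃ M ∈ C, x = M.trace} := ⟨_, hsum, rfl⟩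
  have hbdd : BddBelow {x : ℝ | ∃ M ∈ C, x = M.trace} := by
    refine ⟨0, fun x hx => ?_⟩
    obtain ⟨M, hM, rfl⟩ := hx
    exact psd_trace_nonneg (hpsd M hM)
  refine le_antisymm ?_ (csInf_le hbdd ⟨M₀, hM₀K.1, rfl⟩)
  refine le_csInf ⟨_, hSne⟩ ?_
  rintro x ⟨M, hM, rfl⟩
  by_cases h : M.trace ≤ T
  · exact hMin ⟨hM, h⟩
  · exact (hMin hKsum).trans (le_of_not_ge h)
end

section
/- Let n ≥ 1 and for positive semidefinite symmetric real n×n matrices M₁, M₂ define τ(M₁, M₂) := min { (1/n)·trace(M) : M symmetric, M ≥ M₁, M ≥ M₂ } and δ(M₁, M₂) := 2τ(M₁, M₂) − (1/n)(trace(M₁) + trace(M₂)). Then δ(M₁, M₂) = δ(M₂, M₁), δ(M₁, M₂) ≥ 0, and δ(M₁, M₂) = 0 if and only if M₁ = M₂. -/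
open Matrix

section Aux

variable {n : ℕ}

lemma quad_nonneg {P : Matrix (Fin n) (Fin n) ℝ} (hP : P.PosSemidef) (v : Fin n → ℝ) :
    0 ≤ v ⬝ᵥ P *ᵥ v := by simpa using hP.dotProduct_mulVec_nonneg v

lemma quad_single {P : Matrix (Fin n) (Fin n) ℝ} (i : Fin n) :
    (Pi.single i 1 : Fin n → ℝ) ⬝ᵥ P *ᵥ (Pi.single i 1) = P i i := by
  simp [mulVec_single, single_dotProduct]

lemma diag_nonneg {P : Matrix (Fin n) (Fin n) ℝ} (hP : P.PosSemidef) (i : Fin n) :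
    0 ≤ P i i := by
  have := quad_nonneg hP (Pi.single i 1)
  rwa [quad_single] at this

lemma trace_nonneg' {P : Matrix (Fin n) (Fin n) ℝ} (hP : P.PosSemidef) : 0 ≤ P.trace := by
  rw [Matrix.trace]
  exact Finset.sum_nonneg fun i _ => diag_nonneg hP i

lemma diag_le_trace {P : Matrix (Fin n) (Fin n) ℝ} (hP : P.PosSemidef) (i : Fin n) :
    P i i ≤ P.trace := by
  rw [Matrix.trace]
  exact Finset.single_le_sum (fun j _ => diag_nonneg hP j) (Finset.mem_univ i)

lemma entry_abs_le_trace {P : Matrix (Fin n) (Fin n) ℝ} (hP : P.PosSemidef) (i j : Fin n) :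
    |P i j| ≤ P.trace := by
  rcases eq_or_ne i j with rfl | hij
  · rw [abs_of_nonneg (diag_nonneg hP i)]; exact diag_le_trace hP i
  · have hsym : P j i = P i j := by
      have := hP.1.apply i j
      simpa using this
    have h1 := quad_nonneg hP ((Pi.single i 1 : Fin n → ℝ) + (Pi.single j 1 : Fin n → ℝ))
    have h2 := quad_nonneg hP ((Pi.single i 1 : Fin n → ℝ) - (Pi.single j 1 : Fin n → ℝ))
    rw [show ((Pi.single i 1 : Fin n → ℝ) + (Pi.single j 1 : Fin n → ℝ)) ⬝ᵥ
          P *ᵥ ((Pi.single i 1 : Fin n → ℝ) + (Pi.single j 1 : Fin n → ℝ))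
          = P i i + P i j + (P j i + P j j) by
        simp [mulVec_add, dotProduct_add, add_dotProduct,
          mulVec_single, single_dotProduct, dotProduct_single]
        ring] at h1
    rw [show ((Pi.single i 1 : Fin n → ℝ) - (Pi.single j 1 : Fin n → ℝ)) ⬝ᵥ
          P *ᵥ ((Pi.single i 1 : Fin n → ℝ) - (Pi.single j 1 : Fin n → ℝ))
          = P i i - P i j - (P j i - P j j) by
        simp [mulVec_sub, dotProduct_sub, sub_dotProduct,
          mulVec_single, single_dotProduct, dotProduct_single]
        ring] at h2
    have hd : P i i + P j j ≤ P.trace := by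
      have : P i i + P j j = ∑ k ∈ ({i, j} : Finset (Fin n)), P k k := by
        rw [Finset.sum_pair hij]
      rw [Matrix.trace, this]
      exact Finset.sum_le_sum_of_subset_of_nonneg (Finset.subset_univ _)
        (fun k _ _ => diag_nonneg hP k)
    rcases abs_cases (P i j) with ⟨he, _⟩ | ⟨he, _⟩ <;> rw [he] <;> linarith

end Aux

/-- `τ(M₁, M₂)`: the minimal normalized trace of a symmetric matrix dominating
both `M₁` and `M₂` in the Loewner order. -/
noncomputable def tau (n : ℕ) (M₁ M₂ : Matrix (Fin n) (Fin n) ℝ) : ℝ :=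
  sInf {x : ℝ | ∃ M : Matrix (Fin n) (Fin n) ℝ,
    M.IsHermitian ∧ (M - M₁).PosSemidef ∧ (M - M₂).PosSemidef ∧
    x = (n : ℝ)⁻¹ * M.trace}

/-- `δ(M₁, M₂) := 2τ(M₁, M₂) - (1/n)(trace M₁ + trace M₂)`. -/
noncomputable def delta (n : ℕ) (M₁ M₂ : Matrix (Fin n) (Fin n) ℝ) : ℝ :=
  2 * tau n M₁ M₂ - (n : ℝ)⁻¹ * (M₁.trace + M₂.trace)

/-- `δ` is symmetric, nonnegative, and vanishes exactly on the diagonal. -/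
theorem delta_symm_nonneg_eq_zero_iff
    (n : ℕ) (hn : 1 ≤ n) (M₁ M₂ : Matrix (Fin n) (Fin n) ℝ)
    (h₁ : M₁.PosSemidef) (h₂ : M₂.PosSemidef) :
    delta n M₁ M₂ = delta n M₂ M₁ ∧ 0 ≤ delta n M₁ M₂ ∧
      (delta n M₁ M₂ = 0 ↔ M₁ = M₂) := by
  have hnpos : (0 : ℝ) < (n : ℝ)⁻¹ := by
    have : (0 : ℝ) < (n : ℝ) := by exact_mod_cast hn
    positivity
  set S : Set ℝ := {x : ℝ | ∃ M : Matrix (Fin n) (Fin n) ℝ,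
    M.IsHermitian ∧ (M - M₁).PosSemidef ∧ (M - M₂).PosSemidef ∧
    x = (n : ℝ)⁻¹ * M.trace} with hS
  have hτ : tau n M₁ M₂ = sInf S := rfl
  have i0 : Fin n := ⟨0, hn⟩
  -- nonemptiness
  have hne : S.Nonempty := by
    refine ⟨(n : ℝ)⁻¹ * (M₁ + M₂).trace, M₁ + M₂, h₁.1.add h₂.1, ?_, ?_, rfl⟩
    · rw [add_sub_cancel_left]; exact h₂
    · rw [add_sub_cancel_right]; exact h₁
  -- lower bound
  have hlb : ∀ i j : Fin n, ∀ x ∈ S,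
      (n : ℝ)⁻¹ * ((M₁.trace + M₂.trace + |(M₁ - M₂) i j|) / 2) ≤ x := by
    rintro i j x ⟨M, _, hA, hB, rfl⟩
    have habs : |(M₁ - M₂) i j| ≤ (M - M₁).trace + (M - M₂).trace := by
      have h1 : |(M - M₁) i j| ≤ (M - M₁).trace := entry_abs_le_trace hA i j
      have h2 : |(M - M₂) i j| ≤ (M - M₂).trace := entry_abs_le_trace hB i j
      have : (M₁ - M₂) i j = (M - M₂) i j - (M - M₁) i j := by
        simp [Matrix.sub_apply]
      rw [this]
      calc |(M - M₂) i j - (M - M₁) i j| ≤ |(M - M₂) i j| + |(M - M₁) i j| :=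
            abs_sub _ _
        _ ≤ (M - M₁).trace + (M - M₂).trace := by linarith
    have htr : (M - M₁).trace + (M - M₂).trace
        = 2 * M.trace - (M₁.trace + M₂.trace) := by
      rw [Matrix.trace_sub, Matrix.trace_sub]; ring
    rw [htr] at habs
    have : (M₁.trace + M₂.trace + |(M₁ - M₂) i j|) / 2 ≤ M.trace := by linarith
    exact mul_le_mul_of_nonneg_left this hnpos.le
  have hbdd : BddBelow S :=
    ⟨(n : ℝ)⁻¹ * ((M₁.trace + M₂.trace + |(M₁ - M₂) i0 i0|) / 2), fun x hx => hlb i0 i0 x hx⟩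
  have hτ_ge : (n : ℝ)⁻¹ * ((M₁.trace + M₂.trace) / 2) ≤ tau n M₁ M₂ := by
    rw [hτ]
    refine le_csInf hne fun x hx => le_trans ?_ (hlb i0 i0 x hx)
    have := abs_nonneg ((M₁ - M₂) i0 i0)
    nlinarith
  refine ⟨?_, ?_, ?_⟩
  · -- symmetry
    unfold delta
    have : tau n M₁ M₂ = tau n M₂ M₁ := by
      unfold tau
      congr 1
      ext x
      constructor <;> rintro ⟨M, hH, ha, hb, rfl⟩ <;> exact ⟨M, hH, hb, ha, rfl⟩
    rw [this]; ring
  · -- nonneg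
    unfold delta
    nlinarith
  · constructor
    · -- delta = 0 → M₁ = M₂
      intro hzero
      by_contra hMne
      obtain ⟨i, j, hij⟩ : ∃ i j, (M₁ - M₂) i j ≠ 0 := by
        by_contra hc
        push_neg at hc
        apply hMne
        ext i j
        have := hc i j
        simpa [Matrix.sub_apply, sub_eq_zero] using this
      have hpos : 0 < |(M₁ - M₂) i j| := abs_pos.mpr hij
      have hge : (n : ℝ)⁻¹ * ((M₁.trace + M₂.trace + |(M₁ - M₂) i j|) / 2)
          ≤ tau n M₁ M₂ := by
        rw [hτ]; exact le_csInf hne (hlb i j)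
      have : 0 < delta n M₁ M₂ := by
        unfold delta
        nlinarith
      linarith
    · -- M₁ = M₂ → delta = 0
      rintro rfl
      have hle : tau n M₁ M₁ ≤ (n : ℝ)⁻¹ * M₁.trace := by
        rw [hτ]
        refine csInf_le hbdd ⟨M₁, h₁.1, ?_, ?_, rfl⟩ <;>
          · rw [sub_self]; exact Matrix.PosSemidef.zero
      have hge : (n : ℝ)⁻¹ * M₁.trace ≤ tau n M₁ M₁ := by
        have := hτ_ge
        nlinarith
      unfold delta
      nlinarith
end

section
/- Let n ≥ 1 and let M₁, M₂, M₃ be positive semidefinite symmetric real n×n matrices. Then δ(M₁, M₃) ≤ δ(M₁, M₂) + δ(M₂, M₃), where δ(Mᵢ, Mₖ) := 2·min{(1/n)trace(M) : M symmetric, M ≥ Mᵢ, M ≥ Mₖ} − (1/n)(trace(Mᵢ) + trace(Mₖ)). -/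
open Matrix

lemma tau_set_nonempty (n : ℕ) {M₁ M₂ : Matrix (Fin n) (Fin n) ℝ}
    (h₁ : M₁.PosSemidef) (h₂ : M₂.PosSemidef) :
    Set.Nonempty {x : ℝ | ∃ M : Matrix (Fin n) (Fin n) ℝ,
      M.IsHermitian ∧ (M - M₁).PosSemidef ∧ (M - M₂).PosSemidef ∧
      x = (n : ℝ)⁻¹ * M.trace} := by
  refine ⟨(n : ℝ)⁻¹ * (M₁ + M₂).trace, M₁ + M₂, h₁.1.add h₂.1, ?_, ?_, rfl⟩
  · simpa using h₂
  · simpa using h₁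

lemma tau_set_bddBelow (n : ℕ) {M₁ M₂ : Matrix (Fin n) (Fin n) ℝ}
    (h₁ : M₁.PosSemidef) :
    BddBelow {x : ℝ | ∃ M : Matrix (Fin n) (Fin n) ℝ,
      M.IsHermitian ∧ (M - M₁).PosSemidef ∧ (M - M₂).PosSemidef ∧
      x = (n : ℝ)⁻¹ * M.trace} := by
  refine ⟨0, ?_⟩
  rintro x ⟨M, hM, hM1, hM2, rfl⟩
  have hMpsd : M.PosSemidef := by
    have := hM1.add h₁
    simpa using this
  have htr : (0 : ℝ) ≤ M.trace := by
    rw [Matrix.trace]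
    apply Finset.sum_nonneg
    intro i _
    exact hMpsd.diag_nonneg
  positivity

/-- Triangle inequality for `δ` on positive semidefinite symmetric matrices. -/
theorem delta_triangle
    (n : ℕ) (hn : 1 ≤ n) (M₁ M₂ M₃ : Matrix (Fin n) (Fin n) ℝ)
    (h₁ : M₁.PosSemidef) (h₂ : M₂.PosSemidef) (h₃ : M₃.PosSemidef) :
    delta n M₁ M₃ ≤ delta n M₁ M₂ + delta n M₂ M₃ := by
  set c : ℝ := (n : ℝ)⁻¹ with hc
  have key : ∀ x ∈ {x : ℝ | ∃ M : Matrix (Fin n) (Fin n) ℝ,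
      M.IsHermitian ∧ (M - M₁).PosSemidef ∧ (M - M₂).PosSemidef ∧
      x = (n : ℝ)⁻¹ * M.trace},
      ∀ y ∈ {x : ℝ | ∃ M : Matrix (Fin n) (Fin n) ℝ,
      M.IsHermitian ∧ (M - M₂).PosSemidef ∧ (M - M₃).PosSemidef ∧
      x = (n : ℝ)⁻¹ * M.trace},
      tau n M₁ M₃ ≤ x + y - c * M₂.trace := by
    rintro x ⟨A, hA, hA1, hA2, rfl⟩ y ⟨B, hB, hB2, hB3, rfl⟩
    have hmem : c * (A + B - M₂).trace ∈ {x : ℝ | ∃ M : Matrix (Fin n) (Fin n) ℝ,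
        M.IsHermitian ∧ (M - M₁).PosSemidef ∧ (M - M₃).PosSemidef ∧
        x = (n : ℝ)⁻¹ * M.trace} := by
      refine ⟨A + B - M₂, (hA.add hB).sub h₂.1, ?_, ?_, rfl⟩
      · have := hA1.add hB2
        have he : A + B - M₂ - M₁ = (A - M₁) + (B - M₂) := by abel
        rwa [he]
      · have := hB3.add hA2
        have he : A + B - M₂ - M₃ = (B - M₃) + (A - M₂) := by abel
        rwa [he]
    have hle := csInf_le (tau_set_bddBelow n h₁) hmem
    have htr : (A + B - M₂).trace = A.trace + B.trace - M₂.trace := by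
      simp [trace_add, trace_sub]
    rw [htr] at hle
    calc tau n M₁ M₃ ≤ c * (A.trace + B.trace - M₂.trace) := hle
      _ = c * A.trace + c * B.trace - c * M₂.trace := by ring
  have hmain : tau n M₁ M₃ + c * M₂.trace ≤ tau n M₁ M₂ + tau n M₂ M₃ := by
    have h1 : tau n M₁ M₃ + c * M₂.trace - tau n M₂ M₃ ≤ tau n M₁ M₂ := by
      apply le_csInf (tau_set_nonempty n h₁ h₂)
      intro x hx
      have h2 : tau n M₁ M₃ + c * M₂.trace - x ≤ tau n M₂ M₃ := by
        apply le_csInf (tau_set_nonempty n h₂ h₃)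
        intro y hy
        have := key x hx y hy
        linarith
      linarith
    linarith
  simp only [delta, ← hc]
  linarith
end
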